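/- Let P be a continuous probability transition kernel on a finite nonempty alphabet G and let φ_P be its update rule. Then for every finite word s and every u ∈ [0,1) with u < A_{|s|}(s), the map φ_P(u, ·) is constant on tree(s): for all histories w, z ∈ tree(s), φ_P(u, w) = φ_P(u, z). -/

import Mathlib

open Finset Filter

variable {G : Type*}

/-- The ball of all histories admitting `s` as a suffix.
A history is `w : ℕ → G`, index `i` encoding the symbol `w_{-(i+1)}` (index 0 = most recent).
A word `s : List G` encodes `(s_{-n},…,s_{-1})` with list index `i` = symbol `s_{-(i+1)}`. -/
def tree (s : List G) : Set (ℕ → G) := {w | ∀ i : Fin s.length, w i = s.get i}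

/-- The word `w_{-k:-1}` formed by the last `k` symbols of the history `w`. -/
def word (w : ℕ → G) (k : ℕ) : List G := List.ofFn fun i : Fin k => w i

/-- A probability transition kernel on `G`. -/
def IsKernel [Fintype G] (P : (ℕ → G) → G → ℝ) : Prop :=
  ∀ w, (∀ g, 0 ≤ P w g) ∧ ∑ g, P w g = 1

/-- Total variation distance between distributions on a finite alphabet. -/
noncomputable def tvDist [Fintype G] (p q : G → ℝ) : ℝ := (1 / 2) * ∑ a, |p a - q a|

/-- Oscillation `η_P(s)` of the kernel `P` on the ball `tree s`. -/
noncomputable def eta [Fintype G] (P : (ℕ → G) → G → ℝ) (s : List G) : ℝ :=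
  ⨆ w : tree s, ⨆ z : tree s, tvDist (P w) (P z)

/-- Coupling coefficient `a_{|s|}(g|s)`. -/
noncomputable def aCoef (P : (ℕ → G) → G → ℝ) (g : G) (s : List G) : ℝ :=
  ⨅ w : tree s, P w g

/-- Coupling coefficient `A_{|s|}(s)`. -/
noncomputable def ACoef [Fintype G] (P : (ℕ → G) → G → ℝ) (s : List G) : ℝ :=
  ∑ g, aCoef P g s

/-- `A_k^- = inf { A_k(s) : |s| = k }`. -/
noncomputable def Aminus [Fintype G] (P : (ℕ → G) → G → ℝ) (k : ℕ) : ℝ :=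
  ⨅ s : {s : List G // s.length = k}, ACoef P s.1

/-- Continuity of the kernel: continuity from the product topology (G discrete) to
the total variation distance. -/
def KernelContinuous [Fintype G] (P : (ℕ → G) → G → ℝ) : Prop :=
  ∀ w : ℕ → G, ∀ ε > 0, ∃ k : ℕ, ∀ z : ℕ → G, (∀ i < k, z i = w i) → tvDist (P w) (P z) < ε

/-- `α_k(g | w_{-k:-1})` with the convention `A_{-1}(ε) = a_{-1}(·|ε) = 0`. -/
noncomputable def alphaCoef [Fintype G] [LinearOrder G] (P : (ℕ → G) → G → ℝ)
    (k : ℕ) (g : G) (w : ℕ → G) : ℝ :=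
  (if k = 0 then 0 else ACoef P (word w (k - 1))) +
    ∑ h ∈ univ.filter (fun h => h < g),
      (aCoef P h (word w k) - if k = 0 then 0 else aCoef P h (word w (k - 1)))

/-- `β_k(g | w_{-k:-1})` with the convention `A_{-1}(ε) = a_{-1}(·|ε) = 0`. -/
noncomputable def betaCoef [Fintype G] [LinearOrder G] (P : (ℕ → G) → G → ℝ)
    (k : ℕ) (g : G) (w : ℕ → G) : ℝ :=
  (if k = 0 then 0 else ACoef P (word w (k - 1))) +
    ∑ h ∈ univ.filter (fun h => h ≤ g),
      (aCoef P h (word w k) - if k = 0 then 0 else aCoef P h (word w (k - 1)))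

/-- `φ` is the update rule of `P`: for every `u ∈ [0,1)` and history `w`, `φ u w` is the
(unique) symbol `g` such that `α_k(g|w_{-k:-1}) ≤ u < β_k(g|w_{-k:-1})` for some `k`. -/
def IsUpdateRule [Fintype G] [LinearOrder G] (P : (ℕ → G) → G → ℝ)
    (φ : ℝ → (ℕ → G) → G) : Prop :=
  ∀ u ∈ Set.Ico (0 : ℝ) 1, ∀ w : ℕ → G, ∃ k : ℕ,
    alphaCoef P k (φ u w) w ≤ u ∧ u < betaCoef P k (φ u w) w

section UpdateRule

variable {P : (ℕ → G) → G → ℝ}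

lemma tree_nonempty [Nonempty G] (s : List G) : (tree s).Nonempty :=
  ⟨fun i => s.getD i (Classical.arbitrary G), fun i => by simp⟩

lemma mem_tree_word {v w : ℕ → G} {k : ℕ} : v ∈ tree (word w k) ↔ ∀ i < k, v i = w i := by
  simp only [tree, word, Set.mem_ofPred_eq, List.length_ofFn, List.get_eq_getElem,
    List.getElem_ofFn, Fin.forall_iff]

lemma tree_word_antitone (w : ℕ → G) : Antitone fun k => tree (word w k) :=
  fun _ _ hjk _ hv => mem_tree_word.2 fun i hi => mem_tree_word.1 hv i (hi.trans_le hjk)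

lemma word_congr {w z : ℕ → G} {k : ℕ} (h : ∀ i < k, w i = z i) : word w k = word z k :=
  congrArg List.ofFn (funext fun i => h i i.isLt)

lemma word_length_of_mem_tree {w : ℕ → G} {s : List G} (hw : w ∈ tree s) :
    word w s.length = s :=
  List.ext_get (by simp [word]) fun i _ h => by simpa [word] using hw ⟨i, h⟩

lemma aCoef_nonneg (hP : ∀ w g, 0 ≤ P w g) (g : G) (s : List G) : 0 ≤ aCoef P g s :=
  Real.iInf_nonneg fun w => hP w g

lemma aCoef_le (hP : ∀ w g, 0 ≤ P w g) {g : G} {s : List G} {v : ℕ → G} (hv : v ∈ tree s) :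
    aCoef P g s ≤ P v g :=
  ciInf_le ⟨0, by rintro _ ⟨w, rfl⟩; exact hP w g⟩ (⟨v, hv⟩ : tree s)

lemma aCoef_anti (hP : ∀ w g, 0 ≤ P w g) {g : G} {s t : List G} (h : tree t ⊆ tree s) :
    aCoef P g s ≤ aCoef P g t :=
  have : Nonempty G := ⟨g⟩
  have := (tree_nonempty t).to_subtype
  le_ciInf fun v => aCoef_le hP (h v.2)

lemma aCoef_increment_nonneg (hP : ∀ w g, 0 ≤ P w g) (k : ℕ) (h : G) (w : ℕ → G) :
    0 ≤ aCoef P h (word w k) - if k = 0 then 0 else aCoef P h (word w (k - 1)) := by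
  split_ifs
  · simpa using aCoef_nonneg hP h _
  · exact sub_nonneg.2 (aCoef_anti hP (tree_word_antitone w (k.sub_le 1)))

variable [Fintype G]

lemma ACoef_word_monotone (hP : ∀ w g, 0 ≤ P w g) (w : ℕ → G) :
    Monotone fun k => ACoef P (word w k) :=
  fun _ _ hjk => Finset.sum_le_sum fun _ _ => aCoef_anti hP (tree_word_antitone w hjk)

variable [LinearOrder G]

/- For fixed `w` and `k`, the intervals `[α_k(g), β_k(g))` tile `[A_{k-1}, A_k)` in the order
of `g`, and consecutive levels `k` are stacked on top of each other. -/

lemma betaCoef_le_ACoef (hP : ∀ w g, 0 ≤ P w g) (k : ℕ) (g : G) (w : ℕ → G) :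
    betaCoef P k g w ≤ ACoef P (word w k) := by
  have htotal : (if k = 0 then 0 else ACoef P (word w (k - 1))) +
      ∑ h, (aCoef P h (word w k) - if k = 0 then 0 else aCoef P h (word w (k - 1))) =
      ACoef P (word w k) := by
    split_ifs <;> simp [ACoef, Finset.sum_sub_distrib]
  rw [← htotal, betaCoef]
  gcongr
  · exact fun h _ _ => aCoef_increment_nonneg hP k h w
  · exact Finset.subset_univ _

lemma ACoef_le_alphaCoef_succ (hP : ∀ w g, 0 ≤ P w g) (k : ℕ) (g : G) (w : ℕ → G) :
    ACoef P (word w k) ≤ alphaCoef P (k + 1) g w := by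
  simp only [alphaCoef, Nat.add_sub_cancel, Nat.succ_ne_zero, if_false]
  exact le_add_of_nonneg_right
    (Finset.sum_nonneg fun h _ => by simpa using aCoef_increment_nonneg hP (k + 1) h w)

lemma ACoef_le_alphaCoef (hP : ∀ w g, 0 ≤ P w g) {n k : ℕ} (hnk : n < k) (g : G)
    (w : ℕ → G) : ACoef P (word w n) ≤ alphaCoef P k g w := by
  obtain ⟨k, rfl⟩ := Nat.exists_eq_add_of_lt hnk
  exact (ACoef_word_monotone hP w (n.le_add_right k)).trans (ACoef_le_alphaCoef_succ hP _ g w)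

lemma betaCoef_le_alphaCoef (hP : ∀ w g, 0 ≤ P w g) {k k' : ℕ} {g g' : G}
    (h : toLex (k, g) < toLex (k', g')) (w : ℕ → G) :
    betaCoef P k g w ≤ alphaCoef P k' g' w := by
  rcases Prod.Lex.toLex_lt_toLex.1 h with hk | ⟨rfl, hg⟩
  · exact (betaCoef_le_ACoef hP k g w).trans (ACoef_le_alphaCoef hP hk g' w)
  · refine add_le_add_right (Finset.sum_le_sum_of_subset_of_nonneg ?_
      fun h _ _ => aCoef_increment_nonneg hP k h w) _
    intro h
    simpa only [Finset.mem_filter, Finset.mem_univ, true_and] using fun hh => hh.trans_lt hg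

lemma eq_of_mem_alphaCoef_betaCoef (hP : ∀ w g, 0 ≤ P w g) {u : ℝ} {w : ℕ → G}
    {k k' : ℕ} {g g' : G} (h : alphaCoef P k g w ≤ u ∧ u < betaCoef P k g w)
    (h' : alphaCoef P k' g' w ≤ u ∧ u < betaCoef P k' g' w) : g = g' := by
  rcases lt_trichotomy (toLex (k, g)) (toLex (k', g')) with hlt | heq | hgt
  · linarith [betaCoef_le_alphaCoef hP hlt w]
  · exact (Prod.ext_iff.1 (toLex.injective heq)).2
  · linarith [betaCoef_le_alphaCoef hP hgt w]

lemma IsUpdateRule.eq_of_mem (hP : ∀ w g, 0 ≤ P w g) {φ : ℝ → (ℕ → G) → G}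
    (hφ : IsUpdateRule P φ) {u : ℝ} (hu : u ∈ Set.Ico (0 : ℝ) 1) {w : ℕ → G} {k : ℕ} {g : G}
    (h : alphaCoef P k g w ≤ u ∧ u < betaCoef P k g w) : φ u w = g :=
  let ⟨_, h'⟩ := hφ u hu w
  (eq_of_mem_alphaCoef_betaCoef hP h h').symm

lemma alphaCoef_congr {w z : ℕ → G} {k : ℕ} (h : ∀ i < k, w i = z i) (g : G) :
    alphaCoef P k g w = alphaCoef P k g z := by
  rw [alphaCoef, alphaCoef, word_congr h, word_congr fun i hi => h i (hi.trans_le (k.sub_le 1))]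

lemma betaCoef_congr {w z : ℕ → G} {k : ℕ} (h : ∀ i < k, w i = z i) (g : G) :
    betaCoef P k g w = betaCoef P k g z := by
  rw [betaCoef, betaCoef, word_congr h, word_congr fun i hi => h i (hi.trans_le (k.sub_le 1))]

end UpdateRule

theorem stmt_4_general [Fintype G] [LinearOrder G] (P : (ℕ → G) → G → ℝ)
    (hP : IsKernel P)
    (φ : ℝ → (ℕ → G) → G) (hφ : IsUpdateRule P φ) :
    ∀ s : List G, ∀ u ∈ Set.Ico (0 : ℝ) 1, u < ACoef P s →
      ∀ w ∈ tree s, ∀ z ∈ tree s, φ u w = φ u z := by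
  intro s u hu hus w hw z hz
  have hP₀ : ∀ w g, 0 ≤ P w g := fun w => (hP w).1
  obtain ⟨k, hk⟩ := hφ u hu w
  -- `u < A(s)` forces the level `k` read off `w` to lie within the common suffix `s`.
  have hks : k ≤ s.length := by
    by_contra! hlt
    have := ACoef_le_alphaCoef hP₀ hlt (φ u w) w
    rw [word_length_of_mem_tree hw] at this
    linarith [hk.1]
  have hwz : ∀ i < k, w i = z i := fun i hi => by
    rw [hw ⟨i, hi.trans_le hks⟩, hz ⟨i, hi.trans_le hks⟩]
  rw [alphaCoef_congr hwz, betaCoef_congr hwz] at hk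
  exact (hφ.eq_of_mem hP₀ hu hk).symm

/-- Proposition 4 (phiOk): the update rule `φ_P` of a continuous kernel `P` satisfies:
for every word `s` and every `u ∈ [0,1)` with `u < A_{|s|}(s)`, `φ_P(u, ·)` is constant
on `tree s`. -/
theorem stmt_4 [Fintype G] [Nonempty G] [LinearOrder G] (P : (ℕ → G) → G → ℝ)
    (hP : IsKernel P) (hc : KernelContinuous P)
    (φ : ℝ → (ℕ → G) → G) (hφ : IsUpdateRule P φ) :
    ∀ s : List G, ∀ u ∈ Set.Ico (0 : ℝ) 1, u < ACoef P s →
      ∀ w ∈ tree s, ∀ z ∈ tree s, φ u w = φ u z :=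
  stmt_4_general P hP φ hφ
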